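/- (Theorem 3.1, almost-sure eventual validity.) In the setting of the previous statement, suppose additionally that for each N one has P{ d_W(P*, P̂_N) > r_N } ≤ β_N with ∑_{N=1}^∞ β_N < ∞. Then almost surely there exists N₀ such that for all N ≥ N₀: −L·r_N + τ_ε/(1+ε) ≤ J* ≤ E_{P*}[h(x̂_N,ξ)] ≤ k̂_N·r_N + τ_ε. -/

import Mathlib

open MeasureTheory

noncomputable section

abbrev Vec (m : ℕ) := EuclideanSpace ℝ (Fin m)

/-- A coupling of two Borel probability measures on `Vec m`. -/
def IsCoupling {m : ℕ} (γ : Measure (Vec m × Vec m)) (P Q : Measure (Vec m)) : Prop :=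
  IsProbabilityMeasure γ ∧ γ.map Prod.fst = P ∧ γ.map Prod.snd = Q

/-- Type-1 Wasserstein distance: infimum of `∫ ‖ξ₁ - ξ₂‖₂ dγ` over couplings `γ`. -/
noncomputable def wDist {m : ℕ} (P Q : Measure (Vec m)) : ℝ :=
  sInf {c : ℝ | ∃ γ : Measure (Vec m × Vec m), IsCoupling γ P Q ∧ c = ∫ p, ‖p.1 - p.2‖ ∂γ}

/-- `(x, k)` is RS-feasible for reference value `τ` with respect to `Phat`. -/
def RSFeasible {m : ℕ} {X : Type*} (h : X → Vec m → ℝ)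
    (Phat : Measure (Vec m)) (τ : ℝ) (x : X) (k : ℝ) : Prop :=
  0 ≤ k ∧ ∀ P : Measure (Vec m), IsProbabilityMeasure P →
    Integrable (fun ξ => ‖ξ‖) P → (∫ ξ, h x ξ ∂P) - τ ≤ k * wDist P Phat

/-- Empirical measure `(1/N) ∑ δ_{x i}`. -/
noncomputable def empMeas {m N : ℕ} (xs : Fin N → Vec m) : Measure (Vec m) :=
  (N : ENNReal)⁻¹ • ∑ i : Fin N, Measure.dirac (xs i)

/-!
A Lipschitz loss moves by at most `L * ∫ ‖ξ₁ - ξ₂‖ dγ` along any coupling `γ` of two measures,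
hence by at most `L * d_W`. Since `∑ β_N < ∞`, Borel–Cantelli gives, almost surely,
`d_W(P*, P̂_N) ≤ r_N` for all large `N`. For such `N` the lower bound is this Lipschitz estimate
applied to every decision `x`, and the upper bound is RS-feasibility tested against `P*` itself.
-/

open Filter Set
open scoped NNReal ENNReal

lemma LipschitzWith.integrable_of_integrable_norm {E F : Type*} [NormedAddCommGroup E]
    [MeasurableSpace E] [OpensMeasurableSpace E] [NormedAddCommGroup F] [SecondCountableTopology F]
    {μ : Measure E} [IsFiniteMeasure μ] {K : ℝ≥0} {f : E → F} (hf : LipschitzWith K f)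
    (hμ : Integrable (‖·‖) μ) : Integrable f μ := by
  refine ((integrable_const ‖f 0‖).add (hμ.const_mul K)).mono' hf.continuous.aestronglyMeasurable
    (ae_of_all _ fun x => ?_)
  have hx := hf.dist_le_mul x 0
  rw [dist_eq_norm, dist_eq_norm, sub_zero] at hx
  have := norm_sub_norm_le (f x) (f 0)
  simp only [Pi.add_apply]
  linarith

namespace IsCoupling

variable {m : ℕ} {γ : Measure (Vec m × Vec m)} {P Q : Measure (Vec m)}

lemma integrable_comp_fst (hγ : IsCoupling γ P Q) {g : Vec m → ℝ} (hg : Integrable g P) :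
    Integrable (fun p => g p.1) γ := by
  rw [← hγ.2.1] at hg
  exact hg.comp_measurable measurable_fst

lemma integrable_comp_snd (hγ : IsCoupling γ P Q) {g : Vec m → ℝ} (hg : Integrable g Q) :
    Integrable (fun p => g p.2) γ := by
  rw [← hγ.2.2] at hg
  exact hg.comp_measurable measurable_snd

lemma integrable_norm_sub (hγ : IsCoupling γ P Q) (hP : Integrable (‖·‖) P)
    (hQ : Integrable (‖·‖) Q) : Integrable (fun p => ‖p.1 - p.2‖) γ :=
  ((hγ.integrable_comp_fst hP).add (hγ.integrable_comp_snd hQ)).mono'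
    (continuous_fst.sub continuous_snd).norm.aestronglyMeasurable
    (ae_of_all _ fun p => by simpa using norm_sub_le p.1 p.2)

lemma abs_integral_sub_le (hγ : IsCoupling γ P Q) {K : ℝ≥0} {f : Vec m → ℝ}
    (hf : LipschitzWith K f) (hP : Integrable (‖·‖) P) (hQ : Integrable (‖·‖) Q) :
    |(∫ ξ, f ξ ∂P) - ∫ ξ, f ξ ∂Q| ≤ K * ∫ p, ‖p.1 - p.2‖ ∂γ := by
  have hcost := hγ.integrable_norm_sub hP hQ
  obtain ⟨_, rfl, rfl⟩ := hγ
  have hf₁ : Integrable (fun p => f p.1) γ :=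
    (hf.integrable_of_integrable_norm hP).comp_measurable measurable_fst
  have hf₂ : Integrable (fun p => f p.2) γ :=
    (hf.integrable_of_integrable_norm hQ).comp_measurable measurable_snd
  rw [integral_map measurable_fst.aemeasurable hf.continuous.aestronglyMeasurable,
    integral_map measurable_snd.aemeasurable hf.continuous.aestronglyMeasurable,
    ← integral_sub hf₁ hf₂, ← integral_const_mul]
  calc |∫ p, f p.1 - f p.2 ∂γ| ≤ ∫ p, |f p.1 - f p.2| ∂γ := abs_integral_le_integral_abs
    _ ≤ ∫ p, K * ‖p.1 - p.2‖ ∂γ :=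
      integral_mono (hf₁.sub hf₂).abs (hcost.const_mul _) fun p => by
        simpa [Real.dist_eq, dist_eq_norm] using hf.dist_le_mul p.1 p.2

end IsCoupling

lemma RSFeasible.integral_le {m : ℕ} {X : Type*} {h : X → Vec m → ℝ} {P Q : Measure (Vec m)}
    [IsProbabilityMeasure P] {τ k : ℝ} {x : X} (hfeas : RSFeasible h Q τ x k)
    (hP : Integrable (‖·‖) P) {r : ℝ} (hW : wDist P Q ≤ r) : ∫ ξ, h x ξ ∂P ≤ k * r + τ := by
  have := hfeas.2 P inferInstance hP
  nlinarith [mul_le_mul_of_nonneg_left hW hfeas.1]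

section Wasserstein

variable {m : ℕ} {P Q : Measure (Vec m)} [IsProbabilityMeasure P] [IsProbabilityMeasure Q]

lemma isCoupling_prod : IsCoupling (P.prod Q) P Q :=
  ⟨inferInstance, by simp, by simp⟩

lemma abs_integral_sub_le_mul_wDist {K : ℝ≥0} {f : Vec m → ℝ} (hf : LipschitzWith K f)
    (hP : Integrable (‖·‖) P) (hQ : Integrable (‖·‖) Q) :
    |(∫ ξ, f ξ ∂P) - ∫ ξ, f ξ ∂Q| ≤ K * wDist P Q := by
  rw [wDist, ← smul_eq_mul, ← Real.sInf_smul_of_nonneg K.coe_nonneg]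
  refine le_csInf (Nonempty.smul_set ⟨_, P.prod Q, isCoupling_prod, rfl⟩) ?_
  rintro _ ⟨_, ⟨γ, hγ, rfl⟩, rfl⟩
  exact hγ.abs_integral_sub_le hf hP hQ

theorem confidence_chain_of_wDist_le {X : Type*} [Nonempty X] {h : X → Vec m → ℝ} {K : ℝ≥0}
    (hLip : ∀ x, LipschitzWith K (h x)) (hP : Integrable (‖·‖) P) (hQ : Integrable (‖·‖) Q)
    (hbdd : BddBelow (range fun x => ∫ ξ, h x ξ ∂Q)) {τ k r : ℝ} {x₀ : X}
    (hfeas : RSFeasible h Q τ x₀ k) (hW : wDist P Q ≤ r) :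
    -K * r + (⨅ x, ∫ ξ, h x ξ ∂Q) ≤ (⨅ x, ∫ ξ, h x ξ ∂P) ∧
      (⨅ x, ∫ ξ, h x ξ ∂P) ≤ ∫ ξ, h x₀ ξ ∂P ∧
      ∫ ξ, h x₀ ξ ∂P ≤ k * r + τ := by
  have hlow : ∀ x, -K * r + (⨅ x, ∫ ξ, h x ξ ∂Q) ≤ ∫ ξ, h x ξ ∂P := fun x => by
    have hKant := (abs_le.mp (abs_integral_sub_le_mul_wDist (hLip x) hP hQ)).1
    have hinf := ciInf_le hbdd x
    have hKW := mul_le_mul_of_nonneg_left hW K.coe_nonneg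
    linarith
  exact ⟨le_ciInf hlow, ciInf_le ⟨_, forall_mem_range.2 hlow⟩ x₀, hfeas.integral_le hP hW⟩

end Wasserstein

lemma isProbabilityMeasure_empMeas {m N : ℕ} [NeZero N] (xs : Fin N → Vec m) :
    IsProbabilityMeasure (empMeas xs) := by
  constructor
  simp [empMeas, ENNReal.inv_mul_cancel (NeZero.ne (N : ℝ≥0∞)) (ENNReal.natCast_ne_top N)]

lemma integrable_empMeas {m N : ℕ} [NeZero N] (xs : Fin N → Vec m) (f : Vec m → ℝ) :
    Integrable f (empMeas xs) :=
  (integrable_finsetSum_measure.2 fun i _ => integrable_dirac (by simp)).smul_measure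
    (by simp [NeZero.ne N])

lemma ae_eventually_notMem_of_summable {α : Type*} [MeasurableSpace α] {μ : Measure α}
    {s : ℕ → Set α} {β : ℕ → ℝ} (hβ : ∀ N, 0 ≤ β N) (hsum : Summable β)
    (hs : ∀ N, μ (s N) ≤ ENNReal.ofReal (β N)) : ∀ᵐ ω ∂μ, ∀ᶠ N in atTop, ω ∉ s N :=
  ae_eventually_notMem <| ne_top_of_le_ne_top
    (by rw [← ENNReal.ofReal_tsum_of_nonneg hβ hsum]; exact ENNReal.ofReal_ne_top)
    (ENNReal.tsum_le_tsum hs)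

theorem confidence_interval_eventually_almost_surely_general {m : ℕ}
    {X : Type*} [Nonempty X]
    {Ω : Type*} [MeasurableSpace Ω] (μ : Measure Ω)
    (h : X → Vec m → ℝ) (L : ℝ) (hL : 0 ≤ L)
    (hLip : ∀ x ξ η, |h x ξ - h x η| ≤ L * ‖ξ - η‖)
    (Pstar : Measure (Vec m)) [IsProbabilityMeasure Pstar]
    (hPstarmom : Integrable (fun ξ => ‖ξ‖) Pstar)
    -- i.i.d. samples from Pstar
    (ξs : ℕ → Ω → Vec m)
    -- empirical measures
    (Phat : (N : ℕ) → Ω → Measure (Vec m))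
    (hPhat : ∀ N ω, Phat N ω = empMeas (fun i : Fin N => ξs i ω))
    -- reference values
    (ε : ℝ) (hε : 0 < ε)
    (τ : (N : ℕ) → Ω → ℝ)
    (hτ : ∀ N ω, τ N ω = (1 + ε) * ⨅ x, ∫ ξ, h x ξ ∂(Phat N ω))
    (hfin : ∀ N, ∀ᵐ ω ∂μ, BddBelow (Set.range fun x => ∫ ξ, h x ξ ∂(Phat N ω)))
    -- almost surely RS-feasible random pairs
    (xhat : (N : ℕ) → Ω → X) (khat : (N : ℕ) → Ω → ℝ)
    (hfeas : ∀ N, ∀ᵐ ω ∂μ, RSFeasible h (Phat N ω) (τ N ω) (xhat N ω) (khat N ω))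
    -- concentration of the empirical measures, with summable confidence levels
    (r β : ℕ → ℝ) (hβ0 : ∀ N, 0 < β N)
    (htail : ∀ N, μ {ω | r N < wDist Pstar (Phat N ω)} ≤ ENNReal.ofReal (β N))
    (hsum : Summable β) :
    ∀ᵐ ω ∂μ, ∃ N₀ : ℕ, ∀ N ≥ N₀,
      -L * r N + τ N ω / (1 + ε) ≤ (⨅ x, ∫ ξ, h x ξ ∂Pstar) ∧
      (⨅ x, ∫ ξ, h x ξ ∂Pstar) ≤ (∫ ξ, h (xhat N ω) ξ ∂Pstar) ∧
      (∫ ξ, h (xhat N ω) ξ ∂Pstar) ≤ khat N ω * r N + τ N ω := by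
  lift L to ℝ≥0 using hL
  have hLip' : ∀ x, LipschitzWith L (h x) := fun x => .of_dist_le_mul fun ξ η => by
    simpa [Real.dist_eq, dist_eq_norm] using hLip x ξ η
  filter_upwards [ae_eventually_notMem_of_summable (fun N => (hβ0 N).le) hsum htail,
    ae_all_iff.2 hfin, ae_all_iff.2 hfeas] with ω hclose hbdd hfeasω
  obtain ⟨N₁, hN₁⟩ := eventually_atTop.1 hclose
  refine ⟨max N₁ 1, fun N hN => ?_⟩
  have : NeZero N := ⟨by omega⟩
  have : IsProbabilityMeasure (Phat N ω) := by rw [hPhat]; exact isProbabilityMeasure_empMeas _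
  have hPhatmom : Integrable (‖·‖) (Phat N ω) := by rw [hPhat]; exact integrable_empMeas _ _
  have hτN : τ N ω / (1 + ε) = ⨅ x, ∫ ξ, h x ξ ∂(Phat N ω) := by
    rw [hτ N ω, mul_div_cancel_left₀ _ (by positivity)]
  rw [hτN]
  exact confidence_chain_of_wDist_le hLip' hPstarmom hPhatmom (hbdd N) (hfeasω N)
    (not_lt.1 (hN₁ N (le_of_max_le_left hN)))

/-- Theorem 3.1, almost-sure eventual validity: if the tail bounds
hold with summable beta_N, then almost surely the confidence chain holds for all
sufficiently large N. -/
theorem confidence_interval_eventually_almost_surely {m : ℕ}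
    {X : Type*} [Nonempty X]
    {Ω : Type*} [MeasurableSpace Ω] (μ : Measure Ω) [IsProbabilityMeasure μ]
    (h : X → Vec m → ℝ) (L : ℝ) (hL : 0 ≤ L)
    (hLip : ∀ x ξ η, |h x ξ - h x η| ≤ L * ‖ξ - η‖)
    (hInt : ∀ x (P : Measure (Vec m)), IsProbabilityMeasure P →
      Integrable (fun ξ => ‖ξ‖) P → Integrable (h x) P)
    (Pstar : Measure (Vec m)) [IsProbabilityMeasure Pstar]
    (hPstarmom : Integrable (fun ξ => ‖ξ‖) Pstar)
    -- i.i.d. samples from Pstar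
    (ξs : ℕ → Ω → Vec m) (hmeas : ∀ i, Measurable (ξs i))
    (hindep : ProbabilityTheory.iIndepFun ξs μ)
    (hdist : ∀ i, μ.map (ξs i) = Pstar)
    -- empirical measures
    (Phat : (N : ℕ) → Ω → Measure (Vec m))
    (hPhat : ∀ N ω, Phat N ω = empMeas (fun i : Fin N => ξs i ω))
    -- reference values
    (ε : ℝ) (hε : 0 < ε)
    (τ : (N : ℕ) → Ω → ℝ)
    (hτ : ∀ N ω, τ N ω = (1 + ε) * ⨅ x, ∫ ξ, h x ξ ∂(Phat N ω))
    (hfin : ∀ N, ∀ᵐ ω ∂μ, BddBelow (Set.range fun x => ∫ ξ, h x ξ ∂(Phat N ω)))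
    -- almost surely RS-feasible random pairs
    (xhat : (N : ℕ) → Ω → X) (khat : (N : ℕ) → Ω → ℝ)
    (hfeas : ∀ N, ∀ᵐ ω ∂μ, RSFeasible h (Phat N ω) (τ N ω) (xhat N ω) (khat N ω))
    -- concentration of the empirical measures, with summable confidence levels
    (r β : ℕ → ℝ) (hr : ∀ N, 0 < r N) (hβ0 : ∀ N, 0 < β N) (hβ1 : ∀ N, β N < 1)
    (htail : ∀ N, μ {ω | r N < wDist Pstar (Phat N ω)} ≤ ENNReal.ofReal (β N))
    (hsum : Summable β) :
    ∀ᵐ ω ∂μ, ∃ N₀ : ℕ, ∀ N ≥ N₀,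
      -L * r N + τ N ω / (1 + ε) ≤ (⨅ x, ∫ ξ, h x ξ ∂Pstar) ∧
      (⨅ x, ∫ ξ, h x ξ ∂Pstar) ≤ (∫ ξ, h (xhat N ω) ξ ∂Pstar) ∧
      (∫ ξ, h (xhat N ω) ξ ∂Pstar) ≤ khat N ω * r N + τ N ω :=
  confidence_interval_eventually_almost_surely_general μ h L hL hLip Pstar hPstarmom ξs Phat hPhat ε
    hε τ hτ hfin xhat khat hfeas r β hβ0 htail hsum
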